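/- For every n ≥ 1, the doubled Odd graph on 2n+1 points — the bipartite graph whose vertices are the n-element and the (n+1)-element subsets of a fixed (2n+1)-element set, with an n-set adjacent to an (n+1)-set iff the former is contained in the latter — does not admit perfect state transfer between any pair of vertices at any time. -/

import Mathlib

open Matrix

/-- The transition matrix `U(t) = exp(itA)` of the continuous-time quantum walk on `G`. -/
noncomputable def transitionMatrix {V : Type*} [Fintype V] [DecidableEq V]
    (G : SimpleGraph V) (t : ℝ) : Matrix V V ℂ :=
  letI := Classical.decRel G.Adj
  NormedSpace.exp ((Complex.I * (t : ℂ)) • G.adjMatrix ℂ)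

/-- `G` admits perfect state transfer from `u` to `v` at time `t`. -/
def HasPST {V : Type*} [Fintype V] [DecidableEq V]
    (G : SimpleGraph V) (u v : V) (t : ℝ) : Prop :=
  u ≠ v ∧ ∃ μ : ℂ, transitionMatrix G t *ᵥ (Pi.single u 1 : V → ℂ)
      = μ • (Pi.single v 1 : V → ℂ)

/-- The doubled Odd graph on `2n+1` points: vertices are the `n`-element and the
`(n+1)`-element subsets of a fixed `(2n+1)`-element set, an `n`-set being adjacent
to an `(n+1)`-set iff the former is contained in the latter. -/
def doubledOddGraph (n : ℕ) :
    SimpleGraph {s : Finset (Fin (2 * n + 1)) // s.card = n ∨ s.card = n + 1} :=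
  SimpleGraph.fromRel (fun s t => s.1 ⊆ t.1)

/-!
If `U(t) e_u = μ e_v`, then since `U(t)` is symmetric, every eigenvector `f` of `A` with
eigenvalue `θ` satisfies `e^{itθ} f(u) = μ f(v)`. The doubled Odd graph has the eigenvectors
`1` (eigenvalue `n + 1`), the sign of the bipartition (eigenvalue `-(n + 1)`) and `χ_x - χ_y`
(eigenvalue `n`), where `χ_x(s) = [x ∈ s]` for points `x, y`. The last family forces `v = uᶜ`,
and then the phase at `n` compared with the phase at `n + 1` gives `e^{it} = -1`. Hence
`e^{it(n+1)} = e^{-it(n+1)}`, i.e. `μ = -μ`, which contradicts `μ ≠ 0`.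
-/

open NormedSpace

theorem Matrix.exp_mulVec_of_mulVec_eq_smul {V : Type*} [Fintype V] [DecidableEq V]
    {M : Matrix V V ℂ} {f : V → ℂ} {c : ℂ} (h : M *ᵥ f = c • f) :
    exp M *ᵥ f = Complex.exp c • f := by
  have hpow (k : ℕ) : M ^ k *ᵥ f = c ^ k • f := by
    induction k with
    | zero => simp
    | succ k ih => rw [pow_succ, ← mulVec_mulVec, h, mulVec_smul, ih, smul_smul, pow_succ']
  open scoped Norms.Operator in
  have hM := (exp_series_hasSum_exp' (𝕂 := ℂ) M).map (mulVec.addMonoidHomLeft f)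
    (continuous_id.matrix_mulVec continuous_const)
  have hc := (exp_series_hasSum_exp' (𝕂 := ℂ) c).smul_const f
  rw [← Complex.exp_eq_exp_ℂ] at hc
  refine hM.unique ?_
  simpa [Function.comp_def, mulVec.addMonoidHomLeft, smul_mulVec, hpow, smul_smul] using hc

theorem Matrix.IsSymm.mul_apply_eq_of_mulVec_single_eq {V R : Type*} [Fintype V] [DecidableEq V]
    [CommSemiring R] {M : Matrix V V R} (hM : M.IsSymm) {u v : V} {μ c : R} {f : V → R}
    (hU : M *ᵥ Pi.single u 1 = μ • Pi.single v 1) (hf : M *ᵥ f = c • f) :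
    c * f u = μ * f v := by
  have := congrArg (f ⬝ᵥ ·) hU
  simp only [dotProduct_mulVec, ← mulVec_transpose, hM.eq, hf] at this
  simpa [mul_comm] using this

theorem transitionMatrix_eq {V : Type*} [Fintype V] [DecidableEq V] (G : SimpleGraph V)
    [DecidableRel G.Adj] (t : ℝ) :
    transitionMatrix G t = exp ((Complex.I * t) • G.adjMatrix ℂ) := by
  unfold transitionMatrix
  congr

theorem transitionMatrix_mulVec_ne_zero {V : Type*} [Fintype V] [DecidableEq V] (G : SimpleGraph V)
    (t : ℝ) {x : V → ℂ} (hx : x ≠ 0) : transitionMatrix G t *ᵥ x ≠ 0 := by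
  classical
  rw [transitionMatrix_eq]
  exact fun h => hx <| mulVec_injective_iff_isUnit.2
    (isUnit_exp ((Complex.I * t) • G.adjMatrix ℂ)) (by rw [h, mulVec_zero])

theorem exp_mul_apply_eq_of_transitionMatrix_mulVec_single {V : Type*} [Fintype V]
    [DecidableEq V] {G : SimpleGraph V} [DecidableRel G.Adj] {t : ℝ} {u v : V} {μ θ : ℂ}
    {f : V → ℂ} (hU : transitionMatrix G t *ᵥ Pi.single u 1 = μ • Pi.single v 1)
    (hf : G.adjMatrix ℂ *ᵥ f = θ • f) :
    Complex.exp (Complex.I * t * θ) * f u = μ * f v := by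
  rw [transitionMatrix_eq] at hU
  refine ((G.isSymm_adjMatrix.smul _).exp).mul_apply_eq_of_mulVec_single_eq hU ?_
  exact Matrix.exp_mulVec_of_mulVec_eq_smul (by rw [smul_mulVec, hf, smul_smul])

theorem Complex.exp_mul_neg_eq_of_exp_mul_eq_neg {x : ℂ} {n : ℕ}
    (h : Complex.exp (x * n) = -Complex.exp (x * (n + 1))) :
    Complex.exp (x * -(n + 1)) = Complex.exp (x * (n + 1)) := by
  have hx : Complex.exp x = -1 := by
    rw [mul_add_one, Complex.exp_add] at h
    exact mul_left_cancel₀ (Complex.exp_ne_zero (x * n)) (by linear_combination h)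
  rw [show x * -(n + 1) = ((n + 1 : ℕ) : ℂ) * -x by push_cast; ring,
    show x * (n + 1) = ((n + 1 : ℕ) : ℂ) * x by push_cast; ring,
    Complex.exp_nat_mul, Complex.exp_nat_mul, Complex.exp_neg, hx]
  norm_num

theorem Finset.eq_or_eq_compl_of_forall_iff_iff {α : Type*} [Fintype α] [DecidableEq α]
    {s t : Finset α} (hs : s.Nonempty)
    (h : ∀ x y, ((x ∈ s ↔ y ∈ s) ↔ (x ∈ t ↔ y ∈ t))) : t = s ∨ t = sᶜ := by
  obtain ⟨a, ha⟩ := hs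
  by_cases hat : a ∈ t
  · left; ext x; have := h x a; tauto
  · right; ext x; have := h x a; rw [mem_compl]; tauto

theorem SimpleGraph.adjMatrix_mulVec_eq_neg_smul_of_isRegularOfDegree {V α : Type*}
    [Fintype V] [Ring α] {G : SimpleGraph V} [DecidableRel G.Adj] {d : ℕ}
    (hd : G.IsRegularOfDegree d) {f : V → α} (hf : ∀ u w, G.Adj u w → f w = -f u) :
    G.adjMatrix α *ᵥ f = -(d : α) • f := by
  ext u
  rw [adjMatrix_mulVec_apply,
    Finset.sum_congr rfl fun w hw => hf u w ((mem_neighborFinset G u w).1 hw),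
    Finset.sum_const, card_neighborFinset_eq_degree, hd u]
  simp

namespace doubledOddGraph

abbrev Vertex (n : ℕ) := {s : Finset (Fin (2 * n + 1)) // s.card = n ∨ s.card = n + 1}

variable {n : ℕ}

open Finset

theorem covBy_iff_ssubset {u v : Vertex n} : u.1 ⋖ v.1 ↔ u.1 ⊂ v.1 := by
  refine ⟨CovBy.lt, fun h => covBy_iff_card_sdiff_eq_one.2 ⟨h.subset, ?_⟩⟩
  have := card_lt_card h
  rw [card_sdiff_of_subset h.subset]
  rcases u.2 with hu | hu <;> rcases v.2 with hv | hv <;> omega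

theorem adj_iff_covBy {u v : Vertex n} :
    (doubledOddGraph n).Adj u v ↔ u.1 ⋖ v.1 ∨ v.1 ⋖ u.1 := by
  simp only [doubledOddGraph, SimpleGraph.fromRel_adj, covBy_iff_ssubset,
    ssubset_iff_subset_ne, ne_eq, ← Subtype.ext_iff]
  tauto

theorem val_nonempty (hn : 1 ≤ n) (u : Vertex n) : u.1.Nonempty :=
  card_pos.1 (by rcases u.2 with hu | hu <;> omega)

theorem card_ne_of_adj {u v : Vertex n} (h : (doubledOddGraph n).Adj u v) :
    u.1.card ≠ v.1.card := by
  rcases adj_iff_covBy.1 h with h | h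
  exacts [(card_lt_card h.lt).ne, (card_lt_card h.lt).ne']

theorem card_ne_card_compl (u : Vertex n) : u.1.card ≠ u.1ᶜ.card := by
  rw [card_compl, Fintype.card_fin]
  rcases u.2 with hu | hu <;> omega

theorem card_compl_of_card_eq {u : Vertex n} (hu : u.1.card = n) : u.1ᶜ.card = n + 1 := by
  rw [card_compl, Fintype.card_fin]; omega

def layerSign (u : Vertex n) : ℂ := if u.1.card = n then 1 else -1

theorem layerSign_ne_zero (u : Vertex n) : layerSign u ≠ 0 := by
  unfold layerSign; split_ifs <;> norm_num

theorem layerSign_eq_neg_of_card_ne {u v : Vertex n} (h : u.1.card ≠ v.1.card) :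
    layerSign v = -layerSign u := by
  unfold layerSign
  rcases u.2 with hu | hu <;> rcases v.2 with hv | hv <;> simp [hu, hv] at h ⊢

def memIndicator (x : Fin (2 * n + 1)) (u : Vertex n) : ℂ := if x ∈ u.1 then 1 else 0

theorem memIndicator_sub_apply_eq_zero_iff (x y : Fin (2 * n + 1)) (u : Vertex n) :
    (memIndicator x - memIndicator y) u = 0 ↔ (x ∈ u.1 ↔ y ∈ u.1) := by
  unfold memIndicator
  by_cases hx : x ∈ u.1 <;> by_cases hy : y ∈ u.1 <;> simp [hx, hy]

section

variable [DecidableRel (doubledOddGraph n).Adj]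

theorem sum_neighborFinset_of_card_eq {R : Type*} [AddCommMonoid R] {u : Vertex n}
    (hu : u.1.card = n) (g : Finset (Fin (2 * n + 1)) → R) :
    ∑ w ∈ (doubledOddGraph n).neighborFinset u, g w.1 = ∑ z ∈ u.1ᶜ, g (insert z u.1) := by
  refine (sum_map _ (Function.Embedding.subtype _) g).symm.trans ?_
  rw [← sum_image fun x hx y hy hxy => (insert_inj (mem_compl.1 hx)).1 hxy]
  congr 1
  ext s
  simp only [mem_map, mem_image, SimpleGraph.mem_neighborFinset, mem_compl,
    Function.Embedding.coe_subtype]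
  constructor
  · rintro ⟨w, hw, rfl⟩
    rcases adj_iff_covBy.1 hw with h | h
    · exact covBy_iff_exists_insert.1 h
    · have := card_lt_card h.lt
      rcases w.2 with hw | hw <;> omega
  · rintro ⟨z, hz, rfl⟩
    exact ⟨⟨insert z u.1, Or.inr (by rw [card_insert_of_notMem hz, hu])⟩,
      adj_iff_covBy.2 (Or.inl (covBy_insert hz)), rfl⟩

theorem sum_neighborFinset_of_card_eq_add_one {R : Type*} [AddCommMonoid R] {u : Vertex n}
    (hu : u.1.card = n + 1) (g : Finset (Fin (2 * n + 1)) → R) :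
    ∑ w ∈ (doubledOddGraph n).neighborFinset u, g w.1 = ∑ z ∈ u.1, g (u.1.erase z) := by
  refine (sum_map _ (Function.Embedding.subtype _) g).symm.trans ?_
  rw [← sum_image (erase_injOn u.1)]
  congr 1
  ext s
  simp only [mem_map, mem_image, SimpleGraph.mem_neighborFinset,
    Function.Embedding.coe_subtype]
  constructor
  · rintro ⟨w, hw, rfl⟩
    rcases adj_iff_covBy.1 hw with h | h
    · have := card_lt_card h.lt
      rcases w.2 with hw | hw <;> omega
    · exact covBy_iff_exists_erase.1 h
  · rintro ⟨z, hz, rfl⟩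
    exact ⟨⟨u.1.erase z, Or.inl (by rw [card_erase_of_mem hz, hu]; rfl)⟩,
      adj_iff_covBy.2 (Or.inr (erase_covBy hz)), rfl⟩

theorem isRegularOfDegree : (doubledOddGraph n).IsRegularOfDegree (n + 1) := by
  intro u
  rw [← SimpleGraph.card_neighborFinset_eq_degree, card_eq_sum_ones]
  rcases u.2 with hu | hu
  · rw [sum_neighborFinset_of_card_eq hu fun _ => 1, ← card_eq_sum_ones,
      card_compl_of_card_eq hu]
  · rw [sum_neighborFinset_of_card_eq_add_one hu fun _ => 1, ← card_eq_sum_ones, hu]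

theorem adjMatrix_mulVec_const :
    (doubledOddGraph n).adjMatrix ℂ *ᵥ Function.const _ 1 =
      ((n : ℂ) + 1) • Function.const _ 1 := by
  ext u
  rw [SimpleGraph.adjMatrix_mulVec_const_apply_of_regular isRegularOfDegree]
  simp

theorem adjMatrix_mulVec_layerSign :
    (doubledOddGraph n).adjMatrix ℂ *ᵥ layerSign = -((n : ℂ) + 1) • layerSign := by
  have := SimpleGraph.adjMatrix_mulVec_eq_neg_smul_of_isRegularOfDegree
    (G := doubledOddGraph n) isRegularOfDegree
    fun u v huv => layerSign_eq_neg_of_card_ne (card_ne_of_adj huv)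
  exact_mod_cast this

theorem adjMatrix_mulVec_memIndicator_apply (x : Fin (2 * n + 1)) (u : Vertex n) :
    ((doubledOddGraph n).adjMatrix ℂ *ᵥ memIndicator x) u =
      n * memIndicator x u + if u.1.card = n then 1 else 0 := by
  rw [SimpleGraph.adjMatrix_mulVec_apply]
  unfold memIndicator
  rcases u.2 with hu | hu
  · rw [sum_neighborFinset_of_card_eq hu fun s => if x ∈ s then (1 : ℂ) else 0, if_pos hu]
    by_cases hx : x ∈ u.1
    · simp [hx, card_compl_of_card_eq hu]
    · simp [hx, eq_comm (a := x)]
  · rw [sum_neighborFinset_of_card_eq_add_one hu fun s => if x ∈ s then (1 : ℂ) else 0,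
      if_neg (show u.1.card ≠ n by omega)]
    by_cases hx : x ∈ u.1
    · simp only [mem_erase, hx, and_true]
      rw [sum_boole, filter_ne, card_erase_of_mem hx, hu]
      simp
    · simp [hx]

theorem adjMatrix_mulVec_memIndicator_sub (x y : Fin (2 * n + 1)) :
    (doubledOddGraph n).adjMatrix ℂ *ᵥ (memIndicator x - memIndicator y) =
      (n : ℂ) • (memIndicator x - memIndicator y) := by
  ext u
  simp only [mulVec_sub, Pi.sub_apply, adjMatrix_mulVec_memIndicator_apply, Pi.smul_apply,
    smul_eq_mul]
  ring

end

theorem val_eq_compl_of_hasPST (hn : 1 ≤ n) {u v : Vertex n} {t : ℝ}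
    (h : HasPST (doubledOddGraph n) u v t) : v.1 = u.1ᶜ := by
  classical
  obtain ⟨huv, μ, hU⟩ := h
  have hμ : μ ≠ 0 := by
    rintro rfl
    exact transitionMatrix_mulVec_ne_zero _ t (Pi.single_ne_zero_iff.2 one_ne_zero)
      (by rw [hU, zero_smul])
  have hsame (x y : Fin (2 * n + 1)) : (x ∈ u.1 ↔ y ∈ u.1) ↔ (x ∈ v.1 ↔ y ∈ v.1) := by
    have h := congrArg (· = 0) <|
      exp_mul_apply_eq_of_transitionMatrix_mulVec_single hU (adjMatrix_mulVec_memIndicator_sub x y)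
    simp only [mul_eq_zero, Complex.exp_ne_zero, hμ, false_or, eq_iff_iff,
      memIndicator_sub_apply_eq_zero_iff] at h
    exact h
  rcases eq_or_eq_compl_of_forall_iff_iff (val_nonempty hn u) hsame with h | h
  exacts [absurd (Subtype.ext h.symm) huv, h]

end doubledOddGraph

open doubledOddGraph

/-- For every `n ≥ 1`, the doubled Odd graph on `2n+1` points does
not admit perfect state transfer between any pair of vertices at any time. -/
theorem stmt_15 (n : ℕ) (hn : 1 ≤ n) :
    ∀ (u v : {s : Finset (Fin (2 * n + 1)) // s.card = n ∨ s.card = n + 1}) (t : ℝ),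
      ¬ HasPST (doubledOddGraph n) u v t := by
  classical
  intro u v t h
  have hv := val_eq_compl_of_hasPST hn h
  obtain ⟨-, μ, hU⟩ := h
  have phase {f : Vertex n → ℂ} {θ : ℂ}
      (hf : (doubledOddGraph n).adjMatrix ℂ *ᵥ f = θ • f) :=
    exp_mul_apply_eq_of_transitionMatrix_mulVec_single hU hf
  have hsucc : Complex.exp (Complex.I * t * (n + 1)) = μ := by
    simpa using phase adjMatrix_mulVec_const
  obtain ⟨a, ha⟩ := val_nonempty hn u
  obtain ⟨b, hb⟩ := val_nonempty hn v
  have hbu : b ∉ u.1 := Finset.mem_compl.1 (hv ▸ hb)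
  have hn' : Complex.exp (Complex.I * t * n) = -μ := by
    simpa [memIndicator, ha, hb, hbu, hv] using
      phase (adjMatrix_mulVec_memIndicator_sub a b)
  have hneg : Complex.exp (Complex.I * t * -(n + 1)) = -μ := by
    have h := phase adjMatrix_mulVec_layerSign
    rw [layerSign_eq_neg_of_card_ne (u := u) (v := v) (hv ▸ card_ne_card_compl u)] at h
    exact mul_right_cancel₀ (layerSign_ne_zero u) (by rw [h]; ring)
  have := Complex.exp_mul_neg_eq_of_exp_mul_eq_neg (hn'.trans (congrArg Neg.neg hsucc).symm)
  rw [hneg, hsucc] at this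
  exact Complex.exp_ne_zero _ (hsucc.trans (CharZero.neg_eq_self_iff.1 this))
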